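/- arXiv:math/0607353 — 2 statements merged into one kernel-verified Lean document; each statement's English description precedes it below -/
import Mathlib

section
/- Let X be a compact uniform space (a uniform space whose induced topology is compact) with basepoint ∗, and let E be a symmetric entourage of X such that for every entourage F ⊆ E, every E-chain starting at ∗ is E-homotopic to an F-chain (this is the condition that X_E is chain connected). Then the E-deck group δ_E(X) of E-homotopy classes of E-loops at ∗ is finitely generated: there exist finitely many E-loops λ₁, …, λ_k at ∗ such that every E-loop at ∗ is E-homotopic to a finite concatenation of chains each of which is some λᵢ or its reversal λᵢ⁻¹. -/
universe u

/-- `l` is a (nonempty) `E`-chain, i.e. a finite sequence of points of `X` with all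
consecutive pairs in `E`. -/
def IsChainList {X : Type u} (E : Set (X × X)) (l : List X) : Prop :=
  l ≠ [] ∧ l.Chain' (fun a b => (a, b) ∈ E)

/-- `l'` is an (elementary) `E`-extension of `l`: it is obtained from `l` by inserting one
point, leaving the endpoints fixed, and both `l` and `l'` are `E`-chains. -/
def ChainExt {X : Type u} (E : Set (X × X)) (l l' : List X) : Prop :=
  (∃ (s t : List X) (x : X), l = s ++ t ∧ l' = s ++ x :: t) ∧
    l.head? = l'.head? ∧ l.getLast? = l'.getLast? ∧
    l.Chain' (fun a b => (a, b) ∈ E) ∧ l'.Chain' (fun a b => (a, b) ∈ E)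

/-- Two `E`-chains are `E`-homotopic if they are related by the equivalence relation
generated by one-point `E`-extensions. -/
def ChainHomotopic {X : Type u} (E : Set (X × X)) : List X → List X → Prop :=
  Relation.EqvGen (ChainExt E)

/-- `l` is an `E`-loop at `b`. -/
def IsLoopAt {X : Type u} (E : Set (X × X)) (b : X) (l : List X) : Prop :=
  IsChainList E l ∧ l.head? = some b ∧ l.getLast? = some b

/-- The concatenation of a finite list of loops at `b`, identifying the common basepoint. -/
def concatLoops {X : Type u} (b : X) (ws : List (List X)) : List X :=
  ws.foldl (fun acc w => acc ++ w.tail) [b]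

/-!
Choose a symmetric entourage `W` with `W ○ W ○ W ⊆ E` and, by compactness, a map `r` with finite
range that fixes `∗` and moves every point `W`-little. By chain connectedness every `E`-loop at `∗`
is `E`-homotopic to a `W`-loop, and replacing its points one at a time by their images under `r` is
an `E`-homotopy, because `W ○ W ○ W ⊆ E` keeps every intermediate chain an `E`-chain. Fix for each
point `a` reachable from `∗` an `E`-chain `β a` from `∗` to `a`. Inserting and cancelling
`(β aᵢ)⁻¹ β aᵢ` at every vertex of a loop `a₀ a₁ ⋯ aₙ` through points of the range of `r` writes it
as the product of the loops `β aᵢ · (β aᵢ₊₁)⁻¹`, of which there are finitely many.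
-/

open SetRel

section Chains

variable {X : Type u} {E : Set (X × X)}

theorem ChainExt.append_right {u v w : List X} (h : ChainExt E u v)
    (hw : w.IsChain (· ~[E] ·)) (hlink : ∀ x ∈ u.getLast?, ∀ y ∈ w.head?, (x, y) ∈ E) :
    ChainExt E (u ++ w) (v ++ w) := by
  obtain ⟨⟨s, t, x, rfl, rfl⟩, hhead, hlast, hu, hv⟩ := h
  refine ⟨⟨s, t ++ w, x, by simp, by simp⟩, ?_, ?_, hu.append hw hlink,
    hv.append hw (hlast ▸ hlink)⟩
  · rw [List.head?_append (l := s ++ t), List.head?_append (l := s ++ x :: t), hhead]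
  · rw [List.getLast?_append (l := s ++ t), List.getLast?_append (l := s ++ x :: t), hlast]

namespace ChainHomotopic

variable {l l' l'' : List X}

@[refl] theorem refl (l : List X) : ChainHomotopic E l l := Relation.EqvGen.refl l

theorem symm (h : ChainHomotopic E l l') : ChainHomotopic E l' l := Relation.EqvGen.symm _ _ h

theorem trans (h : ChainHomotopic E l l') (h' : ChainHomotopic E l' l'') :
    ChainHomotopic E l l'' :=
  Relation.EqvGen.trans _ _ _ h h'

instance : Trans (ChainHomotopic E) (ChainHomotopic E) (ChainHomotopic E) := ⟨trans⟩

theorem eq_of_forall_chainExt {α : Sort*} {f : List X → α}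
    (hf : ∀ l l', ChainExt E l l' → f l = f l') (h : ChainHomotopic E l l') : f l = f l' := by
  induction h with
  | rel _ _ h => exact hf _ _ h
  | refl => rfl
  | symm _ _ _ ih => exact ih.symm
  | trans _ _ _ _ _ ih ih' => exact ih.trans ih'

theorem head?_eq (h : ChainHomotopic E l l') : l.head? = l'.head? :=
  h.eq_of_forall_chainExt fun _ _ h => h.2.1

theorem getLast?_eq (h : ChainHomotopic E l l') : l.getLast? = l'.getLast? :=
  h.eq_of_forall_chainExt fun _ _ h => h.2.2.1

theorem isChain_iff (h : ChainHomotopic E l l') :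
    l.IsChain (· ~[E] ·) ↔ l'.IsChain (· ~[E] ·) :=
  Iff.of_eq <| h.eq_of_forall_chainExt fun _ _ h => propext (iff_of_true h.2.2.2.1 h.2.2.2.2)

theorem of_insert {s t : List X} {x : X} (hhead : (s ++ t).head? = (s ++ x :: t).head?)
    (hlast : (s ++ t).getLast? = (s ++ x :: t).getLast?) (h : (s ++ t).IsChain (· ~[E] ·))
    (h' : (s ++ x :: t).IsChain (· ~[E] ·)) : ChainHomotopic E (s ++ t) (s ++ x :: t) :=
  .rel _ _ ⟨⟨s, t, x, rfl, rfl⟩, hhead, hlast, h, h'⟩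

theorem of_insert_of_ne_nil {s t : List X} {x : X} (hs : s ≠ []) (ht : t ≠ [])
    (h : (s ++ t).IsChain (· ~[E] ·)) (h' : (s ++ x :: t).IsChain (· ~[E] ·)) :
    ChainHomotopic E (s ++ t) (s ++ x :: t) := by
  refine of_insert ?_ ?_ h h'
  · simp [List.head?_append_of_ne_nil _ hs]
  · rw [List.getLast?_append_of_ne_nil _ ht, List.append_cons,
      List.getLast?_append_of_ne_nil _ ht]

theorem append_right {u v w : List X} (h : ChainHomotopic E u v)
    (hw : w.IsChain (· ~[E] ·)) (hlink : ∀ x ∈ u.getLast?, ∀ y ∈ w.head?, (x, y) ∈ E) :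
    ChainHomotopic E (u ++ w) (v ++ w) := by
  induction h with
  | rel _ _ h => exact .rel _ _ (h.append_right hw hlink)
  | refl => rfl
  | symm _ _ h ih => exact (ih (getLast?_eq h ▸ hlink)).symm
  | trans _ _ _ h _ ih ih' => exact (ih hlink).trans (ih' (getLast?_eq h ▸ hlink))

theorem replace {s t : List X} {y y' : X} (hs : s ≠ []) (ht : t ≠ [])
    (h : (s ++ y :: t).IsChain (· ~[E] ·)) (h' : (s ++ y' :: t).IsChain (· ~[E] ·))
    (hyy' : (y, y') ∈ E) : ChainHomotopic E (s ++ y :: t) (s ++ y' :: t) := by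
  have hmid : (s ++ y :: y' :: t).IsChain (· ~[E] ·) :=
    List.isChain_append_cons_cons.2
      ⟨(List.isChain_split.1 h).1, hyy', (List.isChain_split.1 h').2⟩
  calc ChainHomotopic E _ (s ++ y :: y' :: t) := by
        simpa using of_insert_of_ne_nil (s := s ++ [y]) (x := y') (by simp) ht
          (by simpa using h) (by simpa using hmid)
    ChainHomotopic E _ (s ++ y' :: t) := (of_insert_of_ne_nil hs (by simp) h' hmid).symm

section Reflexive

variable [SetRel.IsRefl E]

theorem cons_cons_self {u v : List X} {x : X} (h : (u ++ x :: v).IsChain (· ~[E] ·)) :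
    ChainHomotopic E (u ++ x :: x :: v) (u ++ x :: v) := by
  have h' := List.isChain_split.1 h
  have hxx : (u ++ x :: x :: v).IsChain (· ~[E] ·) := by simp [h', SetRel.rfl]
  have := of_insert (s := u ++ [x]) (t := v) (x := x) (by simp) (by simp) (by simpa using h)
    (by simpa using hxx)
  simpa using this.symm

theorem backtrack {u v : List X} {x y : X} (h : (u ++ x :: y :: x :: v).IsChain (· ~[E] ·)) :
    ChainHomotopic E (u ++ x :: y :: x :: v) (u ++ x :: v) := by
  obtain ⟨hux, -, hyxv⟩ := List.isChain_append_cons_cons.1 h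
  have hxx : (u ++ x :: x :: v).IsChain (· ~[E] ·) :=
    List.isChain_append_cons_cons.2 ⟨hux, SetRel.rfl E, hyxv.tail⟩
  calc ChainHomotopic E (u ++ x :: y :: x :: v) (u ++ x :: x :: v) := by
        simpa using (of_insert_of_ne_nil (s := u ++ [x]) (t := x :: v) (x := y) (by simp) (by simp)
          (by simpa using hxx) (by simpa using h)).symm
    ChainHomotopic E _ (u ++ x :: v) := cons_cons_self (List.isChain_split.2 ⟨hux, hyxv.tail⟩)

theorem cancel_reverse (P w : List X) : ∀ (τ : List X) (x : X),
    (P ++ τ.reverse ++ x :: τ ++ w).IsChain (· ~[E] ·) →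
      ChainHomotopic E (P ++ τ.reverse ++ x :: τ ++ w) (P ++ τ.getLastD x :: w)
  | [], x, _ => by simpa using refl (P ++ x :: w)
  | y :: τ, x, h => by
    have e : P ++ (y :: τ).reverse ++ x :: y :: τ ++ w =
        (P ++ τ.reverse) ++ y :: x :: y :: (τ ++ w) := by simp
    have e' : (P ++ τ.reverse) ++ y :: (τ ++ w) = P ++ τ.reverse ++ y :: τ ++ w := by simp
    rw [e] at h ⊢
    have hback := backtrack h
    rw [e'] at hback
    rw [List.getLastD_cons]
    exact hback.trans (cancel_reverse P w τ y (hback.isChain_iff.1 h))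

end Reflexive

end ChainHomotopic

theorem List.IsChain.reverse_append_cons [SetRel.IsSymm E] {x : X} {τ : List X}
    (h : (x :: τ).IsChain (· ~[E] ·)) : (τ.reverse ++ x :: τ).IsChain (· ~[E] ·) := by
  have hrev : (x :: τ).reverse.IsChain (· ~[E] ·) :=
    List.isChain_reverse.2 (h.imp fun _ _ => SetRel.symm E)
  exact List.isChain_split.2 ⟨by simpa using hrev, h⟩

def IsChainFromTo (E : Set (X × X)) (x y : X) (l : List X) : Prop :=
  l.IsChain (· ~[E] ·) ∧ l.head? = some x ∧ l.getLast? = some y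

variable {x y z : X} {l l' : List X}

theorem isLoopAt_iff_isChainFromTo : IsLoopAt E x l ↔ IsChainFromTo E x x l :=
  ⟨fun h => ⟨h.1.2, h.2⟩, fun h => ⟨⟨by rintro rfl; simp [IsChainFromTo] at h, h.1⟩, h.2⟩⟩

theorem ChainHomotopic.isChainFromTo_iff (h : ChainHomotopic E l l') :
    IsChainFromTo E x y l ↔ IsChainFromTo E x y l' := by
  rw [IsChainFromTo, IsChainFromTo, h.isChain_iff, h.head?_eq, h.getLast?_eq]

namespace IsChainFromTo

theorem exists_eq_cons (h : IsChainFromTo E x y l) : ∃ t, l = x :: t := by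
  obtain ⟨-, hhead, -⟩ := h
  cases l with
  | nil => simp at hhead
  | cons z t => exact ⟨t, by simpa using hhead⟩

theorem mono {F : Set (X × X)} (hEF : E ⊆ F) (h : IsChainFromTo E x y l) :
    IsChainFromTo F x y l :=
  ⟨h.1.imp fun _ _ h => hEF h, h.2⟩

theorem reverse [SetRel.IsSymm E] (h : IsChainFromTo E x y l) : IsChainFromTo E y x l.reverse :=
  ⟨List.isChain_reverse.2 (h.1.imp fun _ _ => SetRel.symm E), by simpa using h.2.2,
    by simpa using h.2.1⟩

theorem append {y' : X} (h : IsChainFromTo E x y l) (h' : IsChainFromTo E y' z l')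
    (hyy' : (y, y') ∈ E) : IsChainFromTo E x z (l ++ l') := by
  obtain ⟨hl, hhead, hlast⟩ := h
  obtain ⟨hl', hhead', hlast'⟩ := h'
  refine ⟨hl.append hl' ?_, ?_, ?_⟩
  · simpa [hlast, hhead'] using hyy'
  · simp [List.head?_append, hhead]
  · simp [List.getLast?_append, hlast']

theorem of_append_singleton (h : IsChainFromTo E x z (l ++ [y] ++ [z])) :
    IsChainFromTo E x y (l ++ [y]) ∧ (y, z) ∈ E := by
  obtain ⟨hchain, hhead, -⟩ := h
  obtain ⟨hly, -, hlink⟩ := List.isChain_append.1 hchain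
  exact ⟨⟨hly, by simpa [List.head?_append] using hhead, by simp⟩, hlink y (by simp) z rfl⟩

end IsChainFromTo

end Chains

theorem subset_of_comp_comp_subset {X : Type u} {E W : Set (X × X)} [SetRel.IsRefl W]
    (hWE : W ○ W ○ W ⊆ E) : W ⊆ E :=
  (SetRel.left_subset_comp.trans SetRel.left_subset_comp).trans hWE

section NetApproximation

variable {X : Type u} {E W : Set (X × X)} [SetRel.IsRefl W] [SetRel.IsSymm W] {r : X → X}

theorem isChain_map_append (hWE : W ○ W ○ W ⊆ E) (hr : ∀ x, (x, r x) ∈ W) {s t : List X}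
    (h : (s ++ t).IsChain (· ~[W] ·)) : (s.map r ++ t).IsChain (· ~[E] ·) := by
  obtain ⟨hs, ht, hlink⟩ := List.isChain_append.1 h
  refine List.isChain_append.2 ⟨?_, ht.imp fun _ _ h => subset_of_comp_comp_subset hWE h, ?_⟩
  · exact (List.isChain_map r).2
      (hs.imp fun x y hxy => hWE ⟨y, ⟨x, SetRel.symm W (hr x), hxy⟩, hr y⟩)
  · intro _ hrx y hy
    rw [List.getLast?_map] at hrx
    obtain ⟨x, hx, rfl⟩ := Option.map_eq_some_iff.1 hrx
    exact hWE ⟨y, ⟨x, SetRel.symm W (hr x), hlink x hx y hy⟩, SetRel.rfl W⟩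

theorem ChainHomotopic.map_append (hWE : W ○ W ○ W ⊆ E) (hr : ∀ x, (x, r x) ∈ W) :
    ∀ (t s : List X), s ≠ [] → (s ++ t).IsChain (· ~[W] ·) → (∀ x ∈ t.getLast?, r x = x) →
      ChainHomotopic E (s.map r ++ t) ((s ++ t).map r)
  | [], s, _, _, _ => by simpa using refl (s.map r)
  | [y], s, _, _, hy => by simpa [hy y rfl] using refl (s.map r ++ [y])
  | y :: z :: t, s, hs, h, hlast => by
    have hsy : (s ++ [y] ++ z :: t).IsChain (· ~[W] ·) := by simpa using h
    calc ChainHomotopic E _ (s.map r ++ r y :: z :: t) :=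
          replace (by simpa using hs) (by simp) (isChain_map_append hWE hr h)
            (by simpa using isChain_map_append hWE hr hsy)
            (subset_of_comp_comp_subset hWE (hr y))
      ChainHomotopic E _ ((s ++ y :: z :: t).map r) := by
          simpa using map_append hWE hr (z :: t) (s ++ [y]) (by simp) hsy hlast

theorem ChainHomotopic.map_of_isChainFromTo (hWE : W ○ W ○ W ⊆ E) (hr : ∀ x, (x, r x) ∈ W)
    {x y : X} {l : List X} (hl : IsChainFromTo W x y l) (hx : r x = x) (hy : r y = y) :
    ChainHomotopic E l (l.map r) := by
  obtain ⟨t, rfl⟩ := hl.exists_eq_cons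
  have hlast : ∀ z ∈ t.getLast?, r z = z := by
    intro z hz
    obtain rfl : z = y := by simpa [List.getLast?_cons, Option.mem_def.1 hz] using hl.2.2
    exact hy
  simpa [hx] using map_append hWE hr t [x] (by simp) hl.1 hlast

end NetApproximation

theorem concatLoops_append_singleton {X : Type u} (b : X) (ws : List (List X)) (w : List X) :
    concatLoops b (ws ++ [w]) = concatLoops b ws ++ w.tail := by
  simp [concatLoops]

theorem exists_chainFromTo_selector {X : Type u} (E : Set (X × X)) (b : X) :
    ∃ β : X → List X, β b = [b] ∧
      ∀ a l, IsChainFromTo E b a l → IsChainFromTo E b a (β a) := by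
  classical
  refine ⟨fun a => if a = b then [b] else if h : ∃ l, IsChainFromTo E b a l then h.choose else [],
    by simp, fun a l hl => ?_⟩
  by_cases hab : a = b
  · subst hab
    simp [IsChainFromTo]
  · simp only [hab, if_false, dif_pos (⟨l, hl⟩ : ∃ l, IsChainFromTo E b a l)]
    exact Exists.choose_spec (p := fun l => IsChainFromTo E b a l) ⟨l, hl⟩

section Decomposition

variable {X : Type u} {E : Set (X × X)} [SetRel.IsRefl E] [SetRel.IsSymm E] {b : X}

theorem ChainHomotopic.append_singleton_reverse_tail {Q δ : List X} {a z : X}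
    (hQ : Q.IsChain (· ~[E] ·)) (hQa : Q.getLast? = some a) (hδ : IsChainFromTo E b z δ)
    (haz : (a, z) ∈ E) : ChainHomotopic E (Q ++ [z]) (Q ++ δ.reverse ++ δ.tail) := by
  obtain ⟨τ, rfl⟩ := hδ.exists_eq_cons
  have hτz : τ.getLastD b = z := by
    simpa [List.getLastD_eq_getLast?, List.getLast?_cons] using hδ.2.2
  have hhead : (τ.reverse ++ b :: τ).head? = some z := by
    simpa [List.head?_append] using hδ.reverse.2.1
  have hchain : (Q ++ τ.reverse ++ b :: τ ++ []).IsChain (· ~[E] ·) := by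
    simpa using hQ.append hδ.1.reverse_append_cons (by simp [hQa, hhead, haz])
  have hcancel := (cancel_reverse Q [] τ b hchain).symm
  rw [hτz] at hcancel
  simpa using hcancel

variable {β : X → List X}

theorem exists_concatLoops_of_isChainFromTo (hβb : β b = [b])
    (hβ : ∀ a l, IsChainFromTo E b a l → IsChainFromTo E b a (β a)) {c : List X} {a : X}
    (hc : IsChainFromTo E b a c) :
    ∃ ws : List (List X),
      (∀ w ∈ ws, IsLoopAt E b w ∧ ∃ x ∈ c, ∃ y ∈ c, w = β x ++ (β y).reverse) ∧
      ChainHomotopic E c (concatLoops b ws ++ (β a).tail) := by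
  induction c using List.reverseRecOn generalizing a with
  | nil => simp [IsChainFromTo] at hc
  | append_singleton c z ih =>
    obtain rfl : z = a := by simpa using hc.2.2
    rcases c.eq_nil_or_concat' with rfl | ⟨c, a', rfl⟩
    · obtain rfl : z = b := by simpa using hc.2.1
      exact ⟨[], by simp, by simpa [hβb, concatLoops] using ChainHomotopic.refl [z]⟩
    obtain ⟨hc', ha'a⟩ := hc.of_append_singleton
    obtain ⟨ws, hws, hK⟩ := ih hc'
    set K := concatLoops b ws ++ (β a').tail
    have hKft : IsChainFromTo E b a' K := hK.isChainFromTo_iff.1 hc'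
    have hβa := hβ z _ hc
    have hL : IsLoopAt E b (β a' ++ (β z).reverse) :=
      isLoopAt_iff_isChainFromTo.2 ((hβ a' _ hc').append hβa.reverse ha'a)
    refine ⟨ws ++ [β a' ++ (β z).reverse], ?_, ?_⟩
    · intro w hw
      rcases List.mem_append.1 hw with hw | hw
      · obtain ⟨hwloop, x, hx, y, hy, rfl⟩ := hws w hw
        exact ⟨hwloop, x, List.mem_append_left _ hx, y, List.mem_append_left _ hy, rfl⟩
      · obtain rfl := List.mem_singleton.1 hw
        exact ⟨hL, a', by simp, z, by simp, rfl⟩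
    calc ChainHomotopic E _ (K ++ [z]) :=
          hK.append_right (List.isChain_singleton z) (by simp [ha'a])
      ChainHomotopic E _ (K ++ (β z).reverse ++ (β z).tail) :=
          .append_singleton_reverse_tail hKft.1 hKft.2.2 hβa ha'a
      _ = concatLoops b (ws ++ [β a' ++ (β z).reverse]) ++ (β z).tail := by
          obtain ⟨τ', hτ'⟩ := (hβ a' _ hc').exists_eq_cons
          simp [K, concatLoops_append_singleton, hτ']

end Decomposition

theorem exists_finite_range_map_mem_entourage {X : Type u} [UniformSpace X] [CompactSpace X]
    {W : Set (X × X)} (hW : W ∈ uniformity X) (b : X) :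
    ∃ r : X → X, (Set.range r).Finite ∧ r b = b ∧ ∀ x, (x, r x) ∈ W := by
  classical
  obtain ⟨s, hs, hcover⟩ := isCompact_univ.totallyBounded W hW
  have hnear : ∀ x, ∃ y ∈ s, (x, y) ∈ W := fun x => by
    simpa using hcover (Set.mem_univ x)
  choose f hfs hf using hnear
  refine ⟨fun x => if x = b then b else f x, (hs.insert b).subset ?_, by simp, fun x => ?_⟩
  · rintro _ ⟨x, rfl⟩
    by_cases hx : x = b <;> simp [hx, hfs]
  · by_cases hx : x = b
    · simpa [hx] using refl_mem_uniformity hW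
    · simpa [hx] using hf x

/-- (Statement 8) Let `X` be a compact uniform space with basepoint `∗` and `E` a symmetric
entourage such that every `E`-chain starting at `∗` is `E`-homotopic to an `F`-chain for
every entourage `F ⊆ E` (i.e. `X_E` is chain connected).  Then the `E`-deck group `δ_E(X)`
is finitely generated: there are finitely many `E`-loops `λ₁, …, λ_k` at `∗` such that every
`E`-loop at `∗` is `E`-homotopic to a finite concatenation of chains, each of which is some
`λᵢ` or its reversal `λᵢ⁻¹`. -/
theorem deckGroup_finitely_generated {X : Type u} [UniformSpace X] [CompactSpace X]
    (b : X) (E : Set (X × X)) (hE : E ∈ uniformity X) (hEsym : SetRel.IsSymm E)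
    (hchain : ∀ F ∈ uniformity X, SetRel.IsSymm F → F ⊆ E →
      ∀ l : List X, IsChainList E l → l.head? = some b →
        ∃ l' : List X, IsChainList F l' ∧ ChainHomotopic E l l') :
    ∃ gens : List (List X),
      (∀ w ∈ gens, IsLoopAt E b w) ∧
      ∀ γ : List X, IsLoopAt E b γ →
        ∃ ws : List (List X),
          (∀ w ∈ ws, w ∈ gens ∨ ∃ v ∈ gens, w = v.reverse) ∧
          ChainHomotopic E γ (concatLoops b ws) := by
  have := isRefl_of_mem_uniformity hE
  obtain ⟨W, hW, hWsymm, hWE⟩ := comp_comp_symm_mem_uniformity_sets hE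
  have := isRefl_of_mem_uniformity hW
  obtain ⟨r, hrfin, hrb, hr⟩ := exists_finite_range_map_mem_entourage hW b
  obtain ⟨β, hβb, hβ⟩ := exists_chainFromTo_selector E b
  set G : Set (List X) := {w | IsLoopAt E b w ∧
    ∃ x ∈ Set.range r, ∃ y ∈ Set.range r, w = β x ++ (β y).reverse}
  have hG : G.Finite := (hrfin.image2 (fun x y => β x ++ (β y).reverse) hrfin).subset <| by
    rintro _ ⟨-, x, hx, y, hy, rfl⟩
    exact Set.mem_image2_of_mem hx hy
  refine ⟨hG.toFinset.toList, fun w hw => (hG.mem_toFinset.1 (Finset.mem_toList.1 hw)).1,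
    fun γ hγ => ?_⟩
  obtain ⟨l, ⟨-, hlW⟩, hγl⟩ :=
    hchain W hW hWsymm (subset_of_comp_comp_subset hWE) γ hγ.1 hγ.2.1
  have hl : IsChainFromTo W b b l := ⟨hlW, hγl.head?_eq ▸ hγ.2.1, hγl.getLast?_eq ▸ hγ.2.2⟩
  have hlr : ChainHomotopic E l (l.map r) := .map_of_isChainFromTo hWE hr hl hrb hrb
  obtain ⟨ws, hws, hdecomp⟩ := exists_concatLoops_of_isChainFromTo hβb hβ
    (hlr.isChainFromTo_iff.1 (hl.mono (subset_of_comp_comp_subset hWE)))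
  refine ⟨ws, fun w hw => Or.inl ?_, by simpa [hβb] using (hγl.trans hlr).trans hdecomp⟩
  have hrange : ∀ x ∈ l.map r, x ∈ Set.range r := fun x hx => by
    obtain ⟨z, -, rfl⟩ := List.mem_map.1 hx
    exact Set.mem_range_self z
  obtain ⟨hwloop, x, hx, y, hy, rfl⟩ := hws w hw
  exact Finset.mem_toList.2 (hG.mem_toFinset.2 ⟨hwloop, x, hrange x hx, y, hrange y hy, rfl⟩)
end

section
/- Let G be a group acting on a uniform space X by uniform homeomorphisms, let E be a symmetric G-invariant entourage ((x,y) ∈ E iff (g·x, g·y) ∈ E for all g ∈ G), and let D be an entourage with E∘E∘E ⊆ D such that whenever (g·x, x) ∈ D for some x ∈ X and g ∈ G, then g is the identity. Let q : X → X/G be the quotient map onto the set of G-orbits and F := (q × q)(E) ⊆ (X/G) × (X/G). If γ = (x₀, x₁, …, xₙ) is an E-chain in X with xₙ = g·x₀ for some g ∈ G, and the F-loop q(γ) = (q(x₀), …, q(xₙ)) is F-homotopic to the trivial one-point chain (q(x₀)), then g is the identity (so γ is an E-loop) and γ is E-homotopic to the trivial one-point chain (x₀). -/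
/-! The hypothesis on `D` makes `E`-chains rigid: two `E`-chains from the same point with the
same image in `X/G` coincide, since at a first difference two points of one orbit would be
joined by three `E`-steps. With the `G`-invariance of `E`, which lets every `F`-step be lifted
from any point over its source, lifting from `x₀` becomes a well-defined map from `F`-chains
starting at `q x₀` to `E`-chains starting at `x₀`, and it carries one-point `F`-extensions to
one-point `E`-extensions. Hence it carries the `F`-homotopy from `q γ` to `(q x₀)` to an
`E`-homotopy from `γ` to `(x₀)`. Homotopies fix endpoints, so `g • x₀ = x₀`, and `g = 1`. -/

universe u u'

namespace Relation.EqvGen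

variable {α β : Type*} {r : α → α → Prop} {a b : α}

theorem iff_of_invariant {p : α → Prop} (hp : ∀ a b, r a b → (p a ↔ p b))
    (h : EqvGen r a b) : p a ↔ p b :=
  (Equivalence.eqvGen_iff (r := fun a b => (p a ↔ p b))
    ⟨fun _ => Iff.rfl, Iff.symm, Iff.trans⟩).mp (h.mono hp)

theorem map_of_invariant {s : β → β → Prop} {p : α → Prop}
    (hp : ∀ a b, r a b → (p a ↔ p b)) (f : α → β) (hf : ∀ a b, r a b → p a → s (f a) (f b))
    (h : EqvGen r a b) (ha : p a) : EqvGen s (f a) (f b) := by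
  induction h with
  | rel a b hab => exact .rel _ _ (hf a b hab ha)
  | refl => exact .refl _
  | symm a b hab ih => exact (ih ((iff_of_invariant hp hab).mpr ha)).symm
  | trans a b c hab _ ih₁ ih₂ => exact (ih₁ ha).trans _ _ _ (ih₂ ((iff_of_invariant hp hab).mp ha))

end Relation.EqvGen

theorem ChainHomotopic.getLast?_eq_s17 {X : Type*} {E : Set (X × X)} {l l' : List X}
    (h : ChainHomotopic E l l') : l.getLast? = l'.getLast? :=
  ((h.iff_of_invariant (p := fun m => l.getLast? = m.getLast?)
    fun _ _ hext => by rw [hext.2.2.1]).mp rfl)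

open SetRel

namespace MulAction

variable {G X : Type*} [Group G] [MulAction G X] {E : SetRel X X}

local notation "π" => (Quotient.mk (orbitRel G X) : X → orbitRel.Quotient G X)

theorem eq_of_mk_eq_of_mem {D : SetRel X X} (hfree : ∀ (g : G) (x : X), (g • x, x) ∈ D → g = 1)
    {y y' : X} (hq : π y = π y') (h : (y, y') ∈ D) : y = y' := by
  obtain ⟨g, rfl⟩ := mem_orbit_iff.mp (Quotient.exact hq)
  rw [hfree g y' h, one_smul]

theorem exists_lift_of_mem_image (hE : ∀ (g : G) (x y : X), (x, y) ∈ E → (g • x, g • y) ∈ E)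
    {u : X} {b : orbitRel.Quotient G X} (h : (π u, b) ∈ Prod.map π π '' E) :
    ∃ v, (u, v) ∈ E ∧ π v = b := by
  obtain ⟨⟨u₀, v₀⟩, huv, heq⟩ := h
  simp only [Prod.map_apply, Prod.mk.injEq] at heq
  obtain ⟨g, rfl⟩ := mem_orbit_iff.mp (Quotient.exact heq.1.symm)
  exact ⟨g • v₀, hE g _ _ huv, by rw [orbitRel.Quotient.quotient_smul_eq, heq.2]⟩

theorem eq_of_mem_of_mem_of_mk_eq [E.IsRefl] [E.IsSymm]
    (hfree : ∀ (g : G) (x : X), (g • x, x) ∈ E ○ E ○ E → g = 1)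
    {x a a' : X} (ha : (x, a) ∈ E) (ha' : (x, a') ∈ E) (hq : π a = π a') : a = a' :=
  eq_of_mk_eq_of_mem hfree hq ⟨x, ⟨x, E.symm ha, E.rfl⟩, ha'⟩

theorem exists_between_of_mem_image [E.IsSymm]
    (hE : ∀ (g : G) (x y : X), (x, y) ∈ E → (g • x, g • y) ∈ E)
    (hfree : ∀ (g : G) (x : X), (g • x, x) ∈ E ○ E ○ E → g = 1)
    {z w : X} {a : orbitRel.Quotient G X} (hzw : (z, w) ∈ E)
    (hza : (π z, a) ∈ Prod.map π π '' E) (haw : (a, π w) ∈ Prod.map π π '' E) :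
    ∃ v, π v = a ∧ (z, v) ∈ E ∧ (v, w) ∈ E := by
  obtain ⟨v, hzv, rfl⟩ := exists_lift_of_mem_image hE hza
  obtain ⟨w', hvw', hw'⟩ := exists_lift_of_mem_image hE haw
  obtain rfl : w' = w := eq_of_mk_eq_of_mem hfree hw' ⟨z, ⟨v, E.symm hvw', E.symm hzv⟩, hzw⟩
  exact ⟨v, rfl, hzv, hvw'⟩

theorem exists_isChain_insert [E.IsRefl] [E.IsSymm]
    (hE : ∀ (g : G) (x y : X), (x, y) ∈ E → (g • x, g • y) ∈ E)
    (hfree : ∀ (g : G) (x : X), (g • x, x) ∈ E ○ E ○ E → g = 1)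
    {s t : List X} {a : orbitRel.Quotient G X}
    (hst : (s ++ t).IsChain fun x y => (x, y) ∈ E)
    (hsat : (s.map π ++ a :: t.map π).IsChain fun x y => (x, y) ∈ Prod.map π π '' E)
    (hhead : (s.map π ++ t.map π).head? = (s.map π ++ a :: t.map π).head?)
    (hlast : (s.map π ++ t.map π).getLast? = (s.map π ++ a :: t.map π).getLast?) :
    ∃ v, π v = a ∧ (s ++ v :: t).IsChain (fun x y => (x, y) ∈ E) ∧
      (s ++ t).head? = (s ++ v :: t).head? ∧ (s ++ t).getLast? = (s ++ v :: t).getLast? := by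
  rcases List.eq_nil_or_concat' s with rfl | ⟨s, z, rfl⟩ <;> rcases t with _ | ⟨w, t⟩
  · simp at hhead
  · simp only [List.map_nil, List.nil_append, List.map_cons, List.head?_cons,
      Option.some.injEq] at hhead
    exact ⟨w, hhead, List.isChain_cons_cons.mpr ⟨E.rfl, hst⟩, rfl, by simp⟩
  · simp only [List.map_append, List.map_nil, List.append_nil, List.getLast?_append,
      List.map_cons, List.getLast?_singleton, Option.some_or, Option.some.injEq] at hlast
    refine ⟨z, hlast, ?_, by simp, by simp⟩
    rw [List.append_nil] at hst
    simpa [List.isChain_append_cons_cons] using ⟨hst, E.rfl⟩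
  · simp only [List.map_append, List.map_cons, List.map_nil, List.append_assoc, List.cons_append,
      List.nil_append, List.isChain_append_cons_cons, List.isChain_cons_cons] at hsat hst
    obtain ⟨v, rfl, hzv, hvw⟩ := exists_between_of_mem_image hE hfree hst.2.1 hsat.2.1 hsat.2.2.1
    refine ⟨v, rfl, ?_, by simp, by simp⟩
    simpa [List.isChain_append_cons_cons] using ⟨hst.1, hzv, hvw, hst.2.2⟩

variable (E) in
def IsChainLift (x : X) (c : List (orbitRel.Quotient G X)) (l : List X) : Prop :=
  l.map π = c ∧ l.IsChain (fun a b => (a, b) ∈ E) ∧ l.head? = some x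

theorem exists_isChainLift (hE : ∀ (g : G) (x y : X), (x, y) ∈ E → (g • x, g • y) ∈ E) :
    ∀ {c : List (orbitRel.Quotient G X)} {x : X},
      c.IsChain (fun a b => (a, b) ∈ Prod.map π π '' E) → c.head? = some (π x) →
      ∃ l, IsChainLift E x c l
  | [], _, _, h => by simp at h
  | [_], x, _, h => ⟨[x], by simpa using h.symm, .singleton x, rfl⟩
  | b :: b' :: c, x, hc, h => by
    obtain rfl : b = π x := by simpa using h
    obtain ⟨hb, hc⟩ := List.isChain_cons_cons.mp hc
    obtain ⟨v, hxv, rfl⟩ := exists_lift_of_mem_image hE hb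
    obtain ⟨l, hlc, hl, hlv⟩ := exists_isChainLift hE hc rfl
    exact ⟨x :: l, by rw [List.map_cons, hlc], List.isChain_cons.mpr ⟨by simpa [hlv], hl⟩, rfl⟩

theorem eq_of_map_eq_of_head?_eq [E.IsRefl] [E.IsSymm]
    (hfree : ∀ (g : G) (x : X), (g • x, x) ∈ E ○ E ○ E → g = 1) {l l' : List X}
    (hl : l.IsChain fun a b => (a, b) ∈ E) (hl' : l'.IsChain fun a b => (a, b) ∈ E)
    (hm : l.map π = l'.map π) (hh : l.head? = l'.head?) : l = l' := by
  induction l generalizing l' with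
  | nil => exact (List.map_eq_nil_iff.mp hm.symm).symm
  | cons x l ih =>
    obtain ⟨x', l', rfl⟩ := List.exists_cons_of_ne_nil (l := l') (by rintro rfl; simp at hm)
    obtain rfl : x = x' := by simpa using hh
    simp only [List.map_cons, List.cons.injEq, true_and] at hm
    rcases l with _ | ⟨a, l⟩ <;> rcases l' with _ | ⟨a', l'⟩
    · rfl
    · simp at hm
    · simp at hm
    · simp only [List.map_cons, List.cons.injEq] at hm
      obtain ⟨hxa, hl⟩ := List.isChain_cons_cons.mp hl
      obtain ⟨hxa', hl'⟩ := List.isChain_cons_cons.mp hl'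
      obtain rfl := eq_of_mem_of_mem_of_mk_eq hfree hxa hxa' hm.1
      rw [ih hl hl' (by simp [hm.2]) rfl]

theorem IsChainLift.eq [E.IsRefl] [E.IsSymm]
    (hfree : ∀ (g : G) (x : X), (g • x, x) ∈ E ○ E ○ E → g = 1) {x : X}
    {c : List (orbitRel.Quotient G X)} {l l' : List X}
    (h : IsChainLift E x c l) (h' : IsChainLift E x c l') : l = l' :=
  eq_of_map_eq_of_head?_eq hfree h.2.1 h'.2.1 (h.1.trans h'.1.symm) (h.2.2.trans h'.2.2.symm)

theorem _root_.ChainExt.exists_isChainLift [E.IsRefl] [E.IsSymm]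
    (hE : ∀ (g : G) (x y : X), (x, y) ∈ E → (g • x, g • y) ∈ E)
    (hfree : ∀ (g : G) (x : X), (g • x, x) ∈ E ○ E ○ E → g = 1) {x : X}
    {c c' : List (orbitRel.Quotient G X)} {l : List X} (hc : ChainExt (Prod.map π π '' E) c c')
    (hl : IsChainLift E x c l) : ∃ l', IsChainLift E x c' l' ∧ ChainExt E l l' := by
  obtain ⟨⟨s, t, a, rfl, rfl⟩, hhead, hlast, -, hc'⟩ := hc
  obtain ⟨hm, hlE, hlx⟩ := hl
  obtain ⟨s, t, rfl, rfl, rfl⟩ := List.map_eq_append_iff.mp hm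
  obtain ⟨v, rfl, hv, hhead', hlast'⟩ := exists_isChain_insert hE hfree hlE hc' hhead hlast
  exact ⟨s ++ v :: t, ⟨by simp, hv, hhead' ▸ hlx⟩, ⟨s, t, v, rfl, rfl⟩, hhead', hlast', hlE, hv⟩

open Classical in
theorem _root_.ChainHomotopic.of_map [E.IsRefl] [E.IsSymm]
    (hE : ∀ (g : G) (x y : X), (x, y) ∈ E → (g • x, g • y) ∈ E)
    (hfree : ∀ (g : G) (x : X), (g • x, x) ∈ E ○ E ○ E → g = 1) {x : X} {l l' : List X}
    (hl : l.IsChain fun a b => (a, b) ∈ E) (hl' : l'.IsChain fun a b => (a, b) ∈ E)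
    (hlx : l.head? = some x) (hl'x : l'.head? = some x)
    (h : ChainHomotopic (Prod.map π π '' E) (l.map π) (l'.map π)) : ChainHomotopic E l l' := by
  let lift (c : List (orbitRel.Quotient G X)) : List X :=
    if hc : ∃ m, IsChainLift E x c m then hc.choose else []
  have lift_spec {c} (hc : ∃ m, IsChainLift E x c m) : IsChainLift E x c (lift c) := by
    simpa only [lift, dif_pos hc] using hc.choose_spec
  have lift_eq {c m} (hm : IsChainLift E x c m) : lift c = m := (lift_spec ⟨m, hm⟩).eq hfree hm
  rw [← lift_eq ⟨rfl, hl, hlx⟩, ← lift_eq ⟨rfl, hl', hl'x⟩]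
  refine h.map_of_invariant (p := fun c => ∃ m, IsChainLift E x c m) ?_ lift ?_ ⟨l, rfl, hl, hlx⟩
  · refine fun c c' hcc => ⟨fun ⟨m, hm⟩ => ?_, fun ⟨m', hm'⟩ => ?_⟩
    · exact (hcc.exists_isChainLift hE hfree hm).imp fun _ h => h.1
    · refine exists_isChainLift hE hcc.2.2.2.1 ?_
      rw [hcc.2.1, ← hm'.1, List.head?_map, hm'.2.2, Option.map_some]
  · rintro c c' hcc ⟨m, hm⟩
    obtain ⟨m', hm', hext⟩ := hcc.exists_isChainLift hE hfree (lift_spec ⟨m, hm⟩)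
    rwa [lift_eq hm']

end MulAction

theorem deck_injectivity_general {G : Type u'} {X : Type u} [Group G] [UniformSpace X]
    [MulAction G X]
    (E : Set (X × X)) (hE : E ∈ uniformity X) (hEsym : Prod.swap ⁻¹' E = E)
    (hEinv : ∀ (g : G) (x y : X), (x, y) ∈ E ↔ (g • x, g • y) ∈ E)
    (D : Set (X × X))
    (hED : SetRel.comp (SetRel.comp E E) E ⊆ D)
    (hDfree : ∀ (g : G) (x : X), (g • x, x) ∈ D → g = 1)
    (q : X → Quotient (MulAction.orbitRel G X))
    (hqdef : ∀ x : X, q x = Quotient.mk (MulAction.orbitRel G X) x)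
    (F : Set (Quotient (MulAction.orbitRel G X) × Quotient (MulAction.orbitRel G X)))
    (hFdef : F = (fun p : X × X => (q p.1, q p.2)) '' E)
    (γ : List X) (x₀ : X) (g : G)
    (hγ : IsChainList E γ) (hhead : γ.head? = some x₀)
    (hlast : γ.getLast? = some (g • x₀))
    (hqγ : ChainHomotopic F (γ.map q) [q x₀]) :
    g = 1 ∧ ChainHomotopic E γ [x₀] := by
  obtain rfl : q = Quotient.mk _ := funext hqdef
  subst hFdef
  have : SetRel.IsRefl E := isRefl_of_mem_uniformity hE
  have : SetRel.IsSymm E := inv_eq_self_iff.mp hEsym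
  have hfree (g : G) (x : X) (h : (g • x, x) ∈ E ○ E ○ E) : g = 1 := hDfree g x (hED h)
  have hγE : ChainHomotopic E γ [x₀] :=
    .of_map (fun g x y => (hEinv g x y).1) hfree hγ.2 (.singleton x₀) hhead rfl hqγ
  have hgx : g • x₀ = x₀ := by simpa [hlast] using hγE.getLast?_eq_s17
  exact ⟨hfree g x₀ (by rw [hgx]; exact (E ○ E ○ E).rfl), hγE⟩

/-- (Statement 17) Let `G` act on a uniform space `X` by uniform homeomorphisms, let `E` be
a symmetric `G`-invariant entourage and `D` an entourage with `E∘E∘E ⊆ D` such that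
`(g·x, x) ∈ D` for some `x` forces `g = 1`.  Let `q : X → X/G` be the orbit map and
`F := (q × q)(E)`.  If `γ = (x₀, …, xₙ)` is an `E`-chain with `xₙ = g·x₀` and the `F`-loop
`q(γ)` is `F`-homotopic to the trivial chain `(q(x₀))`, then `g = 1` (so `γ` is an `E`-loop)
and `γ` is `E`-homotopic to the trivial chain `(x₀)`. -/
theorem deck_injectivity {G : Type u'} {X : Type u} [Group G] [UniformSpace X]
    [MulAction G X]
    (hact : ∀ g : G, UniformContinuous fun x : X => g • x)
    (E : Set (X × X)) (hE : E ∈ uniformity X) (hEsym : Prod.swap ⁻¹' E = E)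
    (hEinv : ∀ (g : G) (x y : X), (x, y) ∈ E ↔ (g • x, g • y) ∈ E)
    (D : Set (X × X)) (hD : D ∈ uniformity X)
    (hED : SetRel.comp (SetRel.comp E E) E ⊆ D)
    (hDfree : ∀ (g : G) (x : X), (g • x, x) ∈ D → g = 1)
    (q : X → Quotient (MulAction.orbitRel G X))
    (hqdef : ∀ x : X, q x = Quotient.mk (MulAction.orbitRel G X) x)
    (F : Set (Quotient (MulAction.orbitRel G X) × Quotient (MulAction.orbitRel G X)))
    (hFdef : F = (fun p : X × X => (q p.1, q p.2)) '' E)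
    (γ : List X) (x₀ : X) (g : G)
    (hγ : IsChainList E γ) (hhead : γ.head? = some x₀)
    (hlast : γ.getLast? = some (g • x₀))
    (hqγ : ChainHomotopic F (γ.map q) [q x₀]) :
    g = 1 ∧ ChainHomotopic E γ [x₀] :=
  deck_injectivity_general E hE hEsym hEinv D hED hDfree q hqdef F hFdef γ x₀ g hγ hhead hlast hqγ
end
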